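/- Let N be a CCI-envelope of a CCI X of size 7, and suppose (J₁; {x₀}, X₁, X₁') and (J₂; {x₀}, X₂, X₂') are hyperplane-partitions of type (1,3,3) with J₁ ≠ J₂ sharing the same singleton {x₀}. Then these two partitions of X differ, and after relabeling so that |X₁ ∩ X₂| = 2 and |X₁ ∩ X₂'| = 1, either (J₁ ∩ J₂) ∪ (X₁ △ X₂) or (J₁ ∩ J₂) ∪ (X₁ △ X₂) ∪ {x₀} is a hyperplane of N, where △ is symmetric difference. -/

import Mathlib

/-!
Write `Y = E \ X`. As `|Y| = 5`, each `Jᵢ` is `Y \ {yᵢ}`, with `y₁ ≠ y₂` since `J₁ ≠ J₂`.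

Complements of hyperplanes are cocircuits. So if the two partitions agreed, the cocircuits
`{yᵢ} ∪ (X \ Z)` (`Z = X₁, X₁'`) would put `y₁` and `y₂` into the `N✶`-closures of both `X \ X₁` and
`X \ X₁'`, which also contain `x₀`. Since `{y₁, y₂, x₀}` is coindependent, submodularity of the
dual rank gives `3 + r✶(X) ≤ |X \ X₁| + |X \ X₁'| = |X| + 1`, whereas `r✶(X) = |X| - 1`.

Otherwise let `X₁ ∩ X₂' = {a}` and `X₂ \ X₁ = {b}`. The hyperplanes `J₁ ∪ X₁` and `J₂ ∪ X₂'`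
meet in the independent flat `T = (J₁ ∩ J₂) ∪ {a}` of rank 4, and `b` lies in neither, so the
closure of `S = T ∪ {b}` is a hyperplane. By the exchange property, an element of `cl S` lying in
one of the two hyperplanes already lies in `cl T = T`, so `cl S ⊆ S ∪ {x₀}`.
-/

open Set

namespace Matroid

variable {α : Type*}

/-- A circuit: a minimal dependent set. -/
def IsCircuit' (M : Matroid α) (C : Set α) : Prop :=
  C ⊆ M.E ∧ ¬ M.Indep C ∧ ∀ D, D ⊂ C → M.Indep D

/-- A cocircuit: a circuit of the dual matroid. -/
def IsCocircuit' (M : Matroid α) (C : Set α) : Prop :=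
  M✶.IsCircuit' C

/-- A circuit-cocircuit intersection (CCI). -/
def IsCCI (M : Matroid α) (X : Set α) : Prop :=
  ∃ C K, M.IsCircuit' C ∧ M.IsCocircuit' K ∧ X = C ∩ K

/-- A hyperplane: a maximal proper flat. -/
def IsHyperplane (M : Matroid α) (H : Set α) : Prop :=
  M.IsFlat H ∧ H ≠ M.E ∧ ∀ F, M.IsFlat F → H ⊂ F → F = M.E

/-- The rank of a set: the largest size of an independent subset. -/
noncomputable def rk (M : Matroid α) (A : Set α) : ℕ :=
  sSup {n | ∃ I, I ⊆ A ∧ M.Indep I ∧ I.ncard = n}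

/-- The rank of a matroid. -/
noncomputable def rank (M : Matroid α) : ℕ := M.rk M.E

/-- Deletion of a set from a matroid. -/
def del (M : Matroid α) (D : Set α) : Matroid α := M.restrict (M.E \ D)

/-- Contraction of a set in a matroid. -/
def con (M : Matroid α) (C : Set α) : Matroid α := (M✶.restrict (M.E \ C))✶

/-- `N` is a minor of `M` if it is obtained by a contraction followed by a deletion. -/
def IsMinor' (N M : Matroid α) : Prop := ∃ C D, N = (M.con C).del D

end Matroid

open Matroid


namespace Matroid

variable {α : Type*} {M : Matroid α} {A B C F F' H H' I T X : Set α} {b e x : α}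

lemma IsCircuit'.isCircuit (hC : M.IsCircuit' C) : M.IsCircuit C :=
  isCircuit_iff_forall_ssubset.2 ⟨⟨hC.2.1, hC.1⟩, hC.2.2⟩

lemma IsCocircuit'.isCocircuit (hC : M.IsCocircuit' C) : M.IsCocircuit C :=
  IsCircuit'.isCircuit hC

lemma Indep.ncard_le_rank (hE : M.E.Finite) (hI : M.Indep I) : I.ncard ≤ M.rank :=
  le_csSup ⟨M.E.ncard, by rintro n ⟨J, hJE, -, rfl⟩; exact ncard_le_ncard hJE hE⟩
    ⟨I, hI.subset_ground, hI, rfl⟩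

lemma IsBase.ncard_eq_rank (hE : M.E.Finite) (hB : M.IsBase B) : B.ncard = M.rank := by
  refine (hB.indep.ncard_le_rank hE).antisymm
    (csSup_le ⟨0, ∅, empty_subset _, M.empty_indep, ncard_empty α⟩ ?_)
  rintro n ⟨J, -, hJ, rfl⟩
  obtain ⟨B', hB', hJB'⟩ := hJ.exists_isBase_superset
  rw [← hB'.ncard_eq_ncard_of_isBase hB]
  exact ncard_le_ncard hJB' (hE.subset hB'.subset_ground)

lemma Indep.isBase_of_rank_le_ncard (hE : M.E.Finite) (hI : M.Indep I)
    (h : M.rank ≤ I.ncard) : M.IsBase I :=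
  hI.isBase_of_maximal fun _ hJ hIJ ↦ eq_of_subset_of_ncard_le hIJ
    ((hJ.ncard_le_rank hE).trans h) (hE.subset hJ.subset_ground)

lemma IsCircuit.isBase_sdiff_singleton (hE : M.E.Finite) (hC : M.IsCircuit C)
    (hcard : C.ncard = M.rank + 1) (he : e ∈ C) : M.IsBase (C \ {e}) :=
  (hC.sdiff_singleton_indep he).isBase_of_rank_le_ncard hE <| by
    rw [ncard_sdiff_singleton_of_mem he]; omega

lemma Indep.isHyperplane_closure (hE : M.E.Finite) (hI : M.Indep I)
    (hcard : I.ncard + 1 = M.rank) : M.IsHyperplane (M.closure I) := by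
  have hIcl := M.subset_closure I hI.subset_ground
  refine ⟨M.isFlat_closure I, fun hsp ↦ ?_, fun F hF hIF ↦ ?_⟩
  · have := (hI.isBase_of_spanning ⟨hsp, hI.subset_ground⟩).ncard_eq_rank hE
    omega
  obtain ⟨e, heF, heI⟩ := exists_of_ssubset hIF
  have hins : M.IsBase (insert e I) := by
    refine (hI.insert_indep_iff.2 (.inl ⟨hF.subset_ground heF, heI⟩)).isBase_of_rank_le_ncard
      hE ?_
    rw [ncard_insert_of_notMem (fun h ↦ heI (hIcl h)) (hE.subset hI.subset_ground)]
    omega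
  refine hF.subset_ground.antisymm ?_
  rw [← hins.closure_eq, ← hF.closure]
  exact M.closure_mono (insert_subset heF (hIcl.trans hIF.subset))

lemma IsHyperplane.compl_isCocircuit (hH : M.IsHyperplane H) : M.IsCocircuit (M.E \ H) := by
  rw [isCocircuit_iff_minimal_compl_nonspanning, minimal_subset_iff,
    sdiff_sdiff_cancel_left hH.1.subset_ground]
  refine ⟨fun hsp ↦ hH.2.1 (hH.1.closure ▸ hsp.closure_eq), fun K hK hKH ↦ ?_⟩
  by_contra hne
  obtain ⟨e, ⟨heE, heH⟩, heK⟩ := exists_of_ssubset (hKH.ssubset_of_ne (Ne.symm hne))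
  have hHK : H ⊆ M.E \ K := subset_sdiff.2 ⟨hH.1.subset_ground, (subset_sdiff.1 hKH).2.symm⟩
  have hcl : M.closure (M.E \ K) = M.E := by
    refine hH.2.2 _ (M.isFlat_closure _) ((ssubset_iff_of_subset ?_).2 ⟨e, ?_, heH⟩)
    · exact hHK.trans (M.subset_closure _ sdiff_subset)
    · exact M.subset_closure _ sdiff_subset ⟨heE, heK⟩
  exact hK ⟨hcl, sdiff_subset⟩

lemma IsHyperplane.mem_dual_closure_of_compl_subset (hH : M.IsHyperplane H)
    (he : e ∈ M.E \ H) (hA : M.E \ H ⊆ insert e A) : e ∈ M✶.closure A :=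
  M✶.closure_mono (sdiff_singleton_subset_iff.2 hA)
    (hH.compl_isCocircuit.isCircuit.mem_closure_sdiff_singleton_of_mem he)

lemma IsFlat.inter (hF : M.IsFlat F) (hF' : M.IsFlat F') : M.IsFlat (F ∩ F') := by
  rw [inter_eq_iInter]
  exact IsFlat.iInter (by rintro (_ | _) <;> assumption)

lemma IsFlat.closure_insert_inter_subset (hF : M.IsFlat F) (hXF : X ⊆ F) (hb : b ∉ F) :
    M.closure (insert b X) ∩ F ⊆ M.closure X := by
  rintro z ⟨hz, hzF⟩
  by_contra hzX
  exact hb (hF.closure ▸ M.closure_mono (insert_subset hzF hXF)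
    (closure_exchange ⟨hz, hzX⟩).1)

lemma IsHyperplane.isHyperplane_insert_inter_or (hE : M.E.Finite) (hH : M.IsHyperplane H)
    (hH' : M.IsHyperplane H') (hI : M.Indep (H ∩ H')) (hcard : (H ∩ H').ncard + 2 = M.rank)
    (hb : b ∈ M.E \ (H ∪ H')) (hx : M.E \ (H ∪ H') ⊆ {b, x}) :
    M.IsHyperplane (insert b (H ∩ H')) ∨ M.IsHyperplane (insert x (insert b (H ∩ H'))) := by
  have hflat : M.IsFlat (H ∩ H') := hH.1.inter hH'.1
  have hbH : b ∉ H := fun h ↦ hb.2 (.inl h)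
  have hbH' : b ∉ H' := fun h ↦ hb.2 (.inr h)
  have hS : M.Indep (insert b (H ∩ H')) :=
    hI.insert_indep_iff.2 (.inl ⟨hb.1, by rw [hflat.closure]; exact fun h ↦ hbH h.1⟩)
  have hhyp := hS.isHyperplane_closure hE <| by
    rw [ncard_insert_of_notMem (fun h ↦ hbH h.1) (hE.subset hI.subset_ground)]; omega
  have hsub : M.closure (insert b (H ∩ H')) ⊆ insert x (insert b (H ∩ H')) := by
    intro z hz
    by_cases hzH : z ∈ H
    · have := hH.1.closure_insert_inter_subset inter_subset_left hbH ⟨hz, hzH⟩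
      exact .inr (.inr (hflat.closure ▸ this))
    by_cases hzH' : z ∈ H'
    · have := hH'.1.closure_insert_inter_subset inter_subset_right hbH' ⟨hz, hzH'⟩
      exact .inr (.inr (hflat.closure ▸ this))
    obtain rfl | rfl := hx ⟨M.closure_subset_ground _ hz, by rintro (h | h) <;> contradiction⟩
    exacts [.inr (.inl rfl), .inl rfl]
  have hScl := M.subset_closure _ hS.subset_ground
  by_cases hxS : x ∈ M.closure (insert b (H ∩ H'))
  · exact .inr ((insert_subset hxS hScl).antisymm hsub ▸ hhyp)
  · exact .inl (hScl.antisymm ((subset_insert_iff_of_notMem hxS).1 hsub) ▸ hhyp)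

lemma Indep.encard_add_eRk_union_le (hT : M.Indep T) (hA : T ⊆ M.closure A)
    (hB : T ⊆ M.closure B) : T.encard + M.eRk (A ∪ B) ≤ M.eRk A + M.eRk B :=
  calc T.encard + M.eRk (A ∪ B)
      ≤ M.eRk (M.closure A ∩ M.closure B) + M.eRk (M.closure A ∪ M.closure B) := by
        rw [← hT.eRk_eq_encard, eRk_union_closure_left_eq, eRk_union_closure_right_eq]
        gcongr
        exact M.eRk_mono (subset_inter hA hB)
    _ ≤ M.eRk A + M.eRk B := by
        simpa only [eRk_closure_eq] using
          M.eRk_inter_add_eRk_union_le (M.closure A) (M.closure B)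

end Matroid

lemma Set.exists_eq_sdiff_singleton_of_ncard {α : Type*} {J Y : Set α} (hJY : J ⊆ Y)
    (hY : Y.Finite) (hcard : J.ncard + 1 = Y.ncard) : ∃ y ∈ Y, J = Y \ {y} := by
  have hYJ : (Y \ J).ncard = 1 := by rw [ncard_sdiff hJY (hY.subset hJY)]; omega
  obtain ⟨y, hy⟩ := ncard_eq_one.1 hYJ
  exact ⟨y, (hy ▸ mem_singleton y : y ∈ Y \ J).1, by rw [← hy, sdiff_sdiff_cancel_left hJY]⟩

section Envelope

variable {α : Type*} {N : Matroid α} {X X₁ X₂ X₂' Z Z' : Set α} {x₀ y y₁ y₂ a b : α}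

lemma mem_dual_closure_of_isHyperplane (hH : N.IsHyperplane ((N.E \ X) \ {y} ∪ Z))
    (hy : y ∈ N.E \ X) (hZX : Z ⊆ X) : y ∈ N✶.closure (X \ Z) := by
  have hyZ : y ∉ Z := fun h ↦ hy.2 (hZX h)
  refine hH.mem_dual_closure_of_compl_subset ⟨hy.1, by simp [hy.2, hyZ]⟩ fun w ⟨hwE, hw⟩ ↦ ?_
  simp only [mem_union, mem_sdiff, mem_singleton_iff, not_or, not_and, not_not] at hw ⊢
  tauto

lemma false_of_isHyperplane_sdiff_union (hXfin : X.Finite) (hXcc : N.IsCocircuit X)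
    (hXB : N.IsBase (X \ {x₀})) (hpart : {x₀} ∪ Z ∪ Z' = X)
    (hd : Disjoint ({x₀} : Set α) Z ∧ Disjoint ({x₀} : Set α) Z' ∧ Disjoint Z Z')
    (hy₁ : y₁ ∈ N.E \ X) (hy₂ : y₂ ∈ N.E \ X) (hy : y₁ ≠ y₂)
    (h₁ : N.IsHyperplane ((N.E \ X) \ {y₁} ∪ Z)) (h₁' : N.IsHyperplane ((N.E \ X) \ {y₁} ∪ Z'))
    (h₂ : N.IsHyperplane ((N.E \ X) \ {y₂} ∪ Z)) (h₂' : N.IsHyperplane ((N.E \ X) \ {y₂} ∪ Z')) :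
    False := by
  obtain ⟨hx₀Z, hx₀Z', hZZ'⟩ := hd
  have hx₀ : x₀ ∈ X := hpart ▸ .inl (.inl rfl)
  have hT : N✶.Indep {y₁, y₂, x₀} := hXB.compl_isBase_dual.indep.subset <| by
    rintro w (rfl | rfl | rfl)
    exacts [⟨hy₁.1, fun h ↦ hy₁.2 h.1⟩, ⟨hy₂.1, fun h ↦ hy₂.2 h.1⟩,
      ⟨hXcc.subset_ground hx₀, fun h ↦ h.2 rfl⟩]
  have hTcl : ∀ W, W ⊆ X → Disjoint {x₀} W → N.IsHyperplane ((N.E \ X) \ {y₁} ∪ W) →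
      N.IsHyperplane ((N.E \ X) \ {y₂} ∪ W) → {y₁, y₂, x₀} ⊆ N✶.closure (X \ W) := by
    rintro W hWX hx₀W hW₁ hW₂ w (rfl | rfl | rfl)
    · exact mem_dual_closure_of_isHyperplane hW₁ hy₁ hWX
    · exact mem_dual_closure_of_isHyperplane hW₂ hy₂ hWX
    · exact N✶.subset_closure (X \ W) (sdiff_subset.trans hXcc.subset_ground)
        ⟨hx₀, disjoint_singleton_left.1 hx₀W⟩
  have hsubmod := hT.encard_add_eRk_union_le
    (hTcl Z (hpart ▸ subset_union_left.trans' subset_union_right) hx₀Z h₁ h₂)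
    (hTcl Z' (hpart ▸ subset_union_right) hx₀Z' h₁' h₂')
  have hunion : (X \ Z) ∪ (X \ Z') = X := by rw [← sdiff_inter, hZZ'.inter_eq, sdiff_empty]
  have hinter : (X \ Z) ∩ (X \ Z') = {x₀} := by
    rw [sdiff_inter_sdiff, ← hpart, union_assoc, union_sdiff_right,
      (disjoint_union_right.2 ⟨hx₀Z, hx₀Z'⟩).sdiff_eq_left]
  have hcard := encard_union_add_encard_inter (X \ Z) (X \ Z')
  rw [hunion, hinter, encard_singleton] at hcard
  rw [hunion, encard_eq_three.2 ⟨y₁, y₂, x₀, hy, fun h ↦ hy₁.2 (h ▸ hx₀),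
    fun h ↦ hy₂.2 (h ▸ hx₀), rfl⟩] at hsubmod
  have hle := hsubmod.trans (add_le_add (N✶.eRk_le_encard _) (N✶.eRk_le_encard _))
  have hrk := hXcc.eRk_add_one_eq
  have hfin : N✶.eRk X ≠ ⊤ := fun h ↦ hXfin.encard_lt_top.ne (by rw [← hrk, h, top_add])
  lift N✶.eRk X to ℕ using hfin with n
  rw [← hcard, ← hrk] at hle
  norm_cast at hle
  omega

lemma sdiff_eq_inter_of_partition (hpart : {x₀} ∪ X₂ ∪ X₂' = X) (hX₁X : X₁ ⊆ X)
    (hx₀X₁ : x₀ ∉ X₁) (hdisj : Disjoint X₂ X₂') : X₁ \ X₂ = X₁ ∩ X₂' := by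
  ext w
  refine ⟨fun ⟨hw₁, hw₂⟩ ↦ ⟨hw₁, ?_⟩, fun ⟨hw₁, hw₂'⟩ ↦ ⟨hw₁, disjoint_right.1 hdisj hw₂'⟩⟩
  obtain (rfl | h) | h := hpart ▸ hX₁X hw₁
  exacts [absurd hw₁ hx₀X₁, absurd h hw₂, h]

lemma sdiff_union_subset_of_partition (hpart : {x₀} ∪ X₂ ∪ X₂' = X) :
    X \ (X₁ ∪ X₂') ⊆ insert x₀ (X₂ \ X₁) := by
  rintro w ⟨hw, hw₁₂'⟩
  obtain (rfl | h) | h := hpart ▸ hw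
  exacts [.inl rfl, .inr ⟨h, fun h₁ ↦ hw₁₂' (.inl h₁)⟩, absurd (.inr h) hw₁₂']

lemma isHyperplane_symmDiff_or (hE : N.E.Finite) (hXE : X ⊆ N.E)
    (hXB : ∀ e ∈ X, N✶.IsBase (X \ {e})) (hrank : (N.E \ X).ncard + 1 = N.rank)
    (hy₁ : y₁ ∈ N.E \ X) (hy₂ : y₂ ∈ N.E \ X) (hy : y₁ ≠ y₂) (hX₁X : X₁ ⊆ X)
    (hx₀X₁ : x₀ ∉ X₁) (hpart₂ : {x₀} ∪ X₂ ∪ X₂' = X) (hdisj : Disjoint X₂ X₂')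
    (ha : X₁ ∩ X₂' = {a}) (hb : X₂ \ X₁ = {b})
    (hH : N.IsHyperplane ((N.E \ X) \ {y₁} ∪ X₁))
    (hH' : N.IsHyperplane ((N.E \ X) \ {y₂} ∪ X₂')) :
    N.IsHyperplane (((N.E \ X) \ {y₁} ∩ ((N.E \ X) \ {y₂})) ∪ ((X₁ \ X₂) ∪ (X₂ \ X₁))) ∨
      N.IsHyperplane
        (((N.E \ X) \ {y₁} ∩ ((N.E \ X) \ {y₂})) ∪ ((X₁ \ X₂) ∪ (X₂ \ X₁)) ∪ {x₀}) := by
  have haX : a ∈ X := hX₁X (ha ▸ rfl : a ∈ X₁ ∩ X₂').1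
  have hinter : ((N.E \ X) \ {y₁} ∪ X₁) ∩ ((N.E \ X) \ {y₂} ∪ X₂') =
      insert a ((N.E \ X) \ {y₁} ∩ ((N.E \ X) \ {y₂})) := by
    have hX₂'X : X₂' ⊆ X := hpart₂ ▸ subset_union_right
    rw [insert_eq, union_comm, ← ha]
    ext w
    have := @hX₁X w
    have := @hX₂'X w
    simp only [mem_inter_iff, mem_union, mem_sdiff, mem_singleton_iff]
    tauto
  have htarget : ((N.E \ X) \ {y₁} ∩ ((N.E \ X) \ {y₂})) ∪ ((X₁ \ X₂) ∪ (X₂ \ X₁)) =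
      insert b (insert a ((N.E \ X) \ {y₁} ∩ ((N.E \ X) \ {y₂}))) := by
    rw [sdiff_eq_inter_of_partition hpart₂ hX₁X hx₀X₁ hdisj, ha, hb]
    ext w
    simp only [mem_union, mem_insert_iff, mem_singleton_iff]
    tauto
  have hI : N.Indep (insert a ((N.E \ X) \ {y₁} ∩ ((N.E \ X) \ {y₂}))) :=
    (hXB a haX).compl_isBase_of_dual.indep.subset <| by
      rintro w (rfl | ⟨⟨⟨hwE, hwX⟩, -⟩, -⟩)
      exacts [⟨hXE haX, fun h ↦ h.2 rfl⟩, ⟨hwE, fun h ↦ hwX h.1⟩]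
  have hcard : (insert a ((N.E \ X) \ {y₁} ∩ ((N.E \ X) \ {y₂}))).ncard + 2 = N.rank := by
    have hy₁₂ := ncard_sdiff_add_ncard_of_subset
      (union_subset (singleton_subset_iff.2 hy₁) (singleton_subset_iff.2 hy₂))
      (hE.subset sdiff_subset)
    rw [singleton_union, ncard_pair hy] at hy₁₂
    rw [ncard_insert_of_notMem (fun h ↦ h.1.1.2 haX) (hE.subset (inter_subset_left.trans
      (sdiff_subset.trans sdiff_subset))), sdiff_inter_sdiff, singleton_union]
    omega
  have hbH : b ∈ N.E \ (((N.E \ X) \ {y₁} ∪ X₁) ∪ ((N.E \ X) \ {y₂} ∪ X₂')) := by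
    obtain ⟨hbX₂, hbX₁⟩ : b ∈ X₂ \ X₁ := hb ▸ rfl
    have hbX : b ∈ X := hpart₂ ▸ .inl (.inr hbX₂)
    refine ⟨hXE hbX, ?_⟩
    rintro ((⟨⟨-, h⟩, -⟩ | h) | (⟨⟨-, h⟩, -⟩ | h))
    exacts [h hbX, hbX₁ h, h hbX, disjoint_left.1 hdisj hbX₂ h]
  have hcompl : N.E \ (((N.E \ X) \ {y₁} ∪ X₁) ∪ ((N.E \ X) \ {y₂} ∪ X₂')) ⊆ {b, x₀} := by
    rintro w ⟨hwE, hw⟩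
    simp only [mem_union, mem_sdiff, mem_singleton_iff, not_or, not_and, not_not] at hw
    obtain ⟨⟨hwy₁, hwX₁⟩, hwy₂, hwX₂'⟩ := hw
    by_cases hwX : w ∈ X
    · obtain rfl | hw := sdiff_union_subset_of_partition hpart₂
        ⟨hwX, by rintro (h | h) <;> contradiction⟩
      exacts [.inr rfl, .inl (by rwa [hb] at hw)]
    · exact absurd ((hwy₁ ⟨hwE, hwX⟩).symm.trans (hwy₂ ⟨hwE, hwX⟩)) hy
  rw [htarget, union_singleton, ← hinter]
  exact hH.isHyperplane_insert_inter_or hE hH' (hinter ▸ hI) (hinter ▸ hcard) hbH hcompl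

end Envelope

theorem stmt_19_general {α : Type*} (N : Matroid α)
    (hE : N.E.ncard = 12) (hr : N.rank = 6) (hr' : N✶.rank = 6)
    (X : Set α) (hXcard : X.ncard = 7)
    (hXc : N.IsCircuit' X) (hXcc : N.IsCocircuit' X)
    (x₀ : α) (hx₀ : x₀ ∈ X)
    -- the type-(1,3,3) hyperplane-partition (J₁; {x₀}, X₁, X₁')
    (J₁ X₁ X₁' : Set α) (hJ₁ : J₁ ⊆ N.E \ X) (hJ₁card : J₁.ncard = 4)
    (hpart₁ : {x₀} ∪ X₁ ∪ X₁' = X)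
    (hd₁ : Disjoint ({x₀} : Set α) X₁ ∧ Disjoint ({x₀} : Set α) X₁' ∧ Disjoint X₁ X₁')
    (hH₁ : N.IsHyperplane (J₁ ∪ {x₀}) ∧ N.IsHyperplane (J₁ ∪ X₁) ∧
      N.IsHyperplane (J₁ ∪ X₁'))
    -- the type-(1,3,3) hyperplane-partition (J₂; {x₀}, X₂, X₂')
    (J₂ X₂ X₂' : Set α) (hJ₂ : J₂ ⊆ N.E \ X) (hJ₂card : J₂.ncard = 4)
    (hpart₂ : {x₀} ∪ X₂ ∪ X₂' = X)
    (hd₂ : Disjoint ({x₀} : Set α) X₂ ∧ Disjoint ({x₀} : Set α) X₂' ∧ Disjoint X₂ X₂')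
    (hc₂ : X₂.ncard = 3 ∧ X₂'.ncard = 3)
    (hH₂ : N.IsHyperplane (J₂ ∪ {x₀}) ∧ N.IsHyperplane (J₂ ∪ X₂) ∧
      N.IsHyperplane (J₂ ∪ X₂'))
    (hJne : J₁ ≠ J₂) :
    (¬ ((X₁ = X₂ ∧ X₁' = X₂') ∨ (X₁ = X₂' ∧ X₁' = X₂))) ∧
    ((X₁ ∩ X₂).ncard = 2 ∧ (X₁ ∩ X₂').ncard = 1 →
      N.IsHyperplane ((J₁ ∩ J₂) ∪ ((X₁ \ X₂) ∪ (X₂ \ X₁))) ∨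
      N.IsHyperplane ((J₁ ∩ J₂) ∪ ((X₁ \ X₂) ∪ (X₂ \ X₁)) ∪ {x₀})) := by
  have hEfin : N.E.Finite := finite_of_ncard_pos (by omega)
  have hXE : X ⊆ N.E := hXc.1
  have hY : (N.E \ X).ncard = 5 := by rw [ncard_sdiff hXE (hEfin.subset hXE)]; omega
  obtain ⟨y₁, hy₁, rfl⟩ :=
    exists_eq_sdiff_singleton_of_ncard hJ₁ (hEfin.subset sdiff_subset) (by omega)
  obtain ⟨y₂, hy₂, rfl⟩ :=
    exists_eq_sdiff_singleton_of_ncard hJ₂ (hEfin.subset sdiff_subset) (by omega)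
  have hy : y₁ ≠ y₂ := by rintro rfl; exact hJne rfl
  refine ⟨?_, fun ⟨h₁₂, h₁₂'⟩ ↦ ?_⟩
  · have hfalse := false_of_isHyperplane_sdiff_union (hEfin.subset hXE) hXcc.isCocircuit
      (hXc.isCircuit.isBase_sdiff_singleton hEfin (by omega) hx₀) hpart₁ hd₁ hy₁ hy₂ hy
      hH₁.2.1 hH₁.2.2
    rintro (⟨rfl, rfl⟩ | ⟨rfl, rfl⟩)
    exacts [hfalse hH₂.2.1 hH₂.2.2, hfalse hH₂.2.2 hH₂.2.1]
  · have hX₂X : X₂ ⊆ X := hpart₂ ▸ subset_union_left.trans' subset_union_right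
    obtain ⟨a, ha⟩ := ncard_eq_one.1 h₁₂'
    obtain ⟨b, hb⟩ : ∃ b, X₂ \ X₁ = {b} := ncard_eq_one.1 <| by
      have := ncard_inter_add_ncard_sdiff_eq_ncard X₂ X₁ ((hEfin.subset hXE).subset hX₂X)
      rw [inter_comm, h₁₂, hc₂.1] at this
      omega
    exact isHyperplane_symmDiff_or hEfin hXE
      (fun e he ↦ hXcc.isCocircuit.isCircuit.isBase_sdiff_singleton hEfin (by omega) he)
      (by omega) hy₁ hy₂ hy (hpart₁ ▸ subset_union_left.trans' subset_union_right)
      (disjoint_singleton_left.1 hd₁.1) hpart₂ hd₂.2.2 ha hb hH₁.2.1 hH₂.2.2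

theorem stmt_19 {α : Type*} (N : Matroid α)
    (hE : N.E.ncard = 12) (hr : N.rank = 6) (hr' : N✶.rank = 6)
    (X : Set α) (hXcard : X.ncard = 7)
    (hXc : N.IsCircuit' X) (hXcc : N.IsCocircuit' X)
    (x₀ : α) (hx₀ : x₀ ∈ X)
    -- the type-(1,3,3) hyperplane-partition (J₁; {x₀}, X₁, X₁')
    (J₁ X₁ X₁' : Set α) (hJ₁ : J₁ ⊆ N.E \ X) (hJ₁card : J₁.ncard = 4)
    (hpart₁ : {x₀} ∪ X₁ ∪ X₁' = X)
    (hd₁ : Disjoint ({x₀} : Set α) X₁ ∧ Disjoint ({x₀} : Set α) X₁' ∧ Disjoint X₁ X₁')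
    (hc₁ : X₁.ncard = 3 ∧ X₁'.ncard = 3)
    (hH₁ : N.IsHyperplane (J₁ ∪ {x₀}) ∧ N.IsHyperplane (J₁ ∪ X₁) ∧
      N.IsHyperplane (J₁ ∪ X₁'))
    -- the type-(1,3,3) hyperplane-partition (J₂; {x₀}, X₂, X₂')
    (J₂ X₂ X₂' : Set α) (hJ₂ : J₂ ⊆ N.E \ X) (hJ₂card : J₂.ncard = 4)
    (hpart₂ : {x₀} ∪ X₂ ∪ X₂' = X)
    (hd₂ : Disjoint ({x₀} : Set α) X₂ ∧ Disjoint ({x₀} : Set α) X₂' ∧ Disjoint X₂ X₂')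
    (hc₂ : X₂.ncard = 3 ∧ X₂'.ncard = 3)
    (hH₂ : N.IsHyperplane (J₂ ∪ {x₀}) ∧ N.IsHyperplane (J₂ ∪ X₂) ∧
      N.IsHyperplane (J₂ ∪ X₂'))
    (hJne : J₁ ≠ J₂) :
    (¬ ((X₁ = X₂ ∧ X₁' = X₂') ∨ (X₁ = X₂' ∧ X₁' = X₂))) ∧
    ((X₁ ∩ X₂).ncard = 2 ∧ (X₁ ∩ X₂').ncard = 1 →
      N.IsHyperplane ((J₁ ∩ J₂) ∪ ((X₁ \ X₂) ∪ (X₂ \ X₁))) ∨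
      N.IsHyperplane ((J₁ ∩ J₂) ∪ ((X₁ \ X₂) ∪ (X₂ \ X₁)) ∪ {x₀})) :=
  stmt_19_general N hE hr hr' X hXcard hXc hXcc x₀ hx₀ J₁ X₁ X₁' hJ₁ hJ₁card hpart₁ hd₁ hH₁ J₂ X₂
    X₂' hJ₂ hJ₂card hpart₂ hd₂ hc₂ hH₂ hJne
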